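/- Let U be a bipartite permutation matrix of Schmidt rank r acting on ℂ^{d_A} ⊗ ℂ^{d_B}. Then the number of distinct values taken by the map sending each big column of U to the sum of its d_B × d_B blocks is at most 2^{r−1}, and this bound is tight. -/

import Mathlib

/-!
A column sum of a permutation matrix is a 0-1 matrix with exactly one `1` in every column. All
column sums lie in the span `V` of the blocks, which has dimension `r`, and on the affine
hyperplane `∑ b, M b b₀ = 1`, so their pairwise differences lie in a subspace of dimension at most
`r - 1`. A set of 0-1 vectors whose differences lie in a `d`-dimensional subspace has at most
`2 ^ d` elements: split it along a coordinate on which it is not constant and cut the subspace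
down by the kernel of that coordinate.

For tightness take `U` block diagonal with diagonal blocks `P k`, `k < 2 ^ m`, where `P k` swaps
`2 i` and `2 i + 1` for every bit `i` of `k`. The `P k` are distinct and
`P k = 1 + ∑ i ∈ k, (P (2 ^ i) - 1)`, so the Schmidt rank is at most `m + 1`; the bound just proved
then forces it to be exactly `m + 1`.
-/

/-- A permutation matrix over `ℂ` with an arbitrary (finite) index type. -/
def IsPermMatrix {ι : Type} [DecidableEq ι] (M : Matrix ι ι ℂ) : Prop :=
  ∃ σ : Equiv.Perm ι, ∀ i j, M i j = if i = σ j then 1 else 0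

/-- The `(j, k)` block (of size `dB × dB`) of a bipartite matrix on `ℂ^{dA} ⊗ ℂ^{dB}`. -/
def blk {dA dB : ℕ} (U : Matrix (Fin dA × Fin dB) (Fin dA × Fin dB) ℂ)
    (j k : Fin dA) : Matrix (Fin dB) (Fin dB) ℂ :=
  fun b b' => U (j, b) (k, b')

/-- The Schmidt rank of a bipartite matrix: the dimension of the span of its blocks. -/
noncomputable def schmidtRank {dA dB : ℕ}
    (U : Matrix (Fin dA × Fin dB) (Fin dA × Fin dB) ℂ) : ℕ :=
  Module.finrank ℂ ↥(Submodule.span ℂ {M | ∃ j k, M = blk U j k})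


open Module Finset

section BooleanPoints

variable {K E ι : Type*} [Field K] [AddCommGroup E] [Module K E] [FiniteDimensional K E]
  (φ : ι → Dual K E)

theorem ncard_le_two_pow_finrank_of_sub_mem (hφ : ∀ v, (∀ i, φ i v = 0) → v = 0)
    (W : Submodule K E) (S : Set E) (h01 : ∀ p ∈ S, ∀ i, φ i p = 0 ∨ φ i p = 1)
    (hW : ∀ p ∈ S, ∀ q ∈ S, p - q ∈ W) :
    S.ncard ≤ 2 ^ finrank K W := by
  by_cases hS : S.Subsingleton
  · exact ((Set.ncard_le_one hS.finite).2 fun a ha b hb => hS ha hb).trans Nat.one_le_two_pow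
  obtain ⟨p, hp, q, hq, hpq⟩ := Set.not_subsingleton_iff.1 hS
  obtain ⟨i, hi⟩ : ∃ i, φ i (p - q) ≠ 0 := by
    by_contra! h
    exact hpq (sub_eq_zero.1 (hφ _ h))
  set W' := W ⊓ LinearMap.ker (φ i)
  have hlt : W' < W :=
    lt_of_le_of_ne inf_le_left fun h => hi (Submodule.mem_inf.1 (h ▸ hW p hp q hq : p - q ∈ W')).2
  have hsplit : S = {p ∈ S | φ i p = 0} ∪ {p ∈ S | φ i p = 1} := by
    ext p
    constructor
    · intro h
      rcases h01 p h i with h' | h' <;> simp [h, h']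
    · rintro (h | h) <;> exact h.1
  have hpart : ∀ c, {p ∈ S | φ i p = c}.ncard ≤ 2 ^ finrank K W' := fun c =>
    ncard_le_two_pow_finrank_of_sub_mem hφ W' _ (fun p hp => h01 p hp.1)
      fun p hp q hq => ⟨hW p hp.1 q hq.1, by simp [hp.2, hq.2]⟩
  calc S.ncard ≤ 2 ^ finrank K W' + 2 ^ finrank K W' :=
        hsplit ▸ (Set.ncard_union_le _ _).trans (add_le_add (hpart 0) (hpart 1))
    _ = 2 ^ (finrank K W' + 1) := by ring
    _ ≤ 2 ^ finrank K W := Nat.pow_le_pow_right two_pos (Submodule.finrank_lt_finrank_of_lt hlt)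
termination_by finrank K W
decreasing_by exact Submodule.finrank_lt_finrank_of_lt hlt

theorem ncard_le_two_pow_finrank_sub_one (hφ : ∀ v, (∀ i, φ i v = 0) → v = 0) (ℓ : Dual K E)
    (V : Submodule K E) (S : Set E) (h01 : ∀ p ∈ S, ∀ i, φ i p = 0 ∨ φ i p = 1) (hSV : S ⊆ V)
    (hℓ : ∀ p ∈ S, ℓ p = 1) :
    S.ncard ≤ 2 ^ (finrank K V - 1) := by
  obtain rfl | ⟨p, hp⟩ := S.eq_empty_or_nonempty
  · simp
  have hlt : V ⊓ LinearMap.ker ℓ < V :=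
    lt_of_le_of_ne inf_le_left fun h => by
      simpa [hℓ p hp] using (h.symm ▸ hSV hp : p ∈ V ⊓ LinearMap.ker ℓ).2
  calc S.ncard ≤ 2 ^ finrank K ↥(V ⊓ LinearMap.ker ℓ) :=
        ncard_le_two_pow_finrank_of_sub_mem φ hφ _ S h01 fun p hp q hq =>
          ⟨V.sub_mem (hSV hp) (hSV hq), by simp [hℓ p hp, hℓ q hq]⟩
    _ ≤ 2 ^ (finrank K V - 1) :=
        Nat.pow_le_pow_right two_pos (by have := Submodule.finrank_lt_finrank_of_lt hlt; omega)

end BooleanPoints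

theorem sum_blk_apply {dA dB : ℕ} {U : Matrix (Fin dA × Fin dB) (Fin dA × Fin dB) ℂ}
    {σ : Equiv.Perm (Fin dA × Fin dB)} (hσ : ∀ i j, U i j = if i = σ j then 1 else 0)
    (k : Fin dA) (b b' : Fin dB) :
    (∑ j, blk U j k) b b' = if b = (σ (k, b')).2 then 1 else 0 := by
  simp [Matrix.sum_apply, blk, hσ, Prod.ext_iff, ite_and]

theorem ncard_range_sum_blk_le {dA dB : ℕ} {U : Matrix (Fin dA × Fin dB) (Fin dA × Fin dB) ℂ}
    (hU : IsPermMatrix U) :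
    (Set.range fun k => ∑ j, blk U j k).ncard ≤ 2 ^ (schmidtRank U - 1) := by
  obtain ⟨σ, hσ⟩ := hU
  rcases isEmpty_or_nonempty (Fin dB) with _ | ⟨⟨b₀⟩⟩
  · exact (Set.ncard_le_one_of_subsingleton _).trans Nat.one_le_two_pow
  refine ncard_le_two_pow_finrank_sub_one
    (fun e : Fin dB × Fin dB => Matrix.entryLinearMap ℂ ℂ e.1 e.2)
    (fun M hM => Matrix.ext fun a b => hM (a, b)) (∑ b, Matrix.entryLinearMap ℂ ℂ b b₀)
    _ _ ?_ ?_ ?_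
  · rintro _ ⟨k, rfl⟩ e
    simp only [Matrix.entryLinearMap_apply, sum_blk_apply hσ]
    split_ifs <;> simp
  · rintro _ ⟨k, rfl⟩
    exact Submodule.sum_mem _ fun j _ => Submodule.subset_span ⟨j, k, rfl⟩
  · rintro _ ⟨k, rfl⟩
    simp only [LinearMap.coe_sum, Finset.sum_apply, Matrix.entryLinearMap_apply,
      sum_blk_apply hσ]
    simp

-- The transpose of `Equiv.Perm.permMatrix τ`, matching the convention of `IsPermMatrix`.
def permMat {n : Type} [DecidableEq n] (τ : Equiv.Perm n) : Matrix n n ℂ :=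
  fun a b => if a = τ b then 1 else 0

theorem isPermMatrix_permMat {n : Type} [DecidableEq n] (τ : Equiv.Perm n) :
    IsPermMatrix (permMat τ) :=
  ⟨τ, fun _ _ => rfl⟩

theorem permMat_injective {n : Type} [DecidableEq n] :
    Function.Injective (permMat (n := n)) := fun τ τ' h =>
  Equiv.ext fun b => by simpa [permMat] using congrFun (congrFun h (τ b)) b

theorem permMat_ne_zero {n : Type} [DecidableEq n] [Nonempty n] (τ : Equiv.Perm n) :
    permMat τ ≠ 0 := fun h => by
  obtain ⟨b⟩ := ‹Nonempty n›
  simpa [permMat] using congrFun (congrFun h (τ b)) b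

section BlockDiagonal

variable {dA dB : ℕ} (g : Fin dA → Equiv.Perm (Fin dB))

def blockDiagPerm : Matrix (Fin dA × Fin dB) (Fin dA × Fin dB) ℂ :=
  permMat (Equiv.prodCongrRight g)

theorem blk_blockDiagPerm (j k : Fin dA) :
    blk (blockDiagPerm g) j k = if j = k then permMat (g k) else 0 := by
  ext b b'
  by_cases h : j = k
  · subst h; simp [blk, blockDiagPerm, permMat]
  · simp [blk, blockDiagPerm, permMat, h]

theorem sum_blk_blockDiagPerm (k : Fin dA) :
    ∑ j, blk (blockDiagPerm g) j k = permMat (g k) := by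
  simp [blk_blockDiagPerm]

theorem schmidtRank_blockDiagPerm_le {X : Submodule ℂ (Matrix (Fin dB) (Fin dB) ℂ)}
    (hX : ∀ k, permMat (g k) ∈ X) : schmidtRank (blockDiagPerm g) ≤ finrank ℂ X := by
  refine Submodule.finrank_mono (Submodule.span_le.2 ?_)
  rintro _ ⟨j, k, rfl⟩
  rw [blk_blockDiagPerm]
  split_ifs
  · exact hX k
  · exact X.zero_mem

theorem one_le_schmidtRank_blockDiagPerm [NeZero dA] [NeZero dB] :
    1 ≤ schmidtRank (blockDiagPerm g) := by
  refine Submodule.one_le_finrank_iff.2 fun h => permMat_ne_zero (g 0) ?_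
  rw [← Submodule.mem_bot ℂ, ← h, ← sum_blk_blockDiagPerm]
  exact Submodule.sum_mem _ fun j _ => Submodule.subset_span ⟨j, 0, rfl⟩

end BlockDiagonal

-- `b ↦ b xor 1`
def pairSwap {n : ℕ} (b : Fin (2 * n)) : Fin (2 * n) :=
  ⟨2 * (b / 2) + (1 - b % 2), by omega⟩

def flipPairs (n k : ℕ) : Equiv.Perm (Fin (2 * n)) :=
  Function.Involutive.toPerm (fun b => if k.testBit (b / 2) then pairSwap b else b) fun b => by
    have hdiv : (pairSwap b : ℕ) / 2 = b / 2 := by simp only [pairSwap]; omega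
    by_cases h : k.testBit (b / 2)
    · simp only [h, hdiv, if_true]
      exact Fin.ext (by simp only [pairSwap]; omega)
    · simp [h]

theorem flipPairs_apply (n k : ℕ) (b : Fin (2 * n)) :
    flipPairs n k b = if k.testBit (b / 2) then pairSwap b else b := rfl

theorem flipPairs_injective {n k k' : ℕ} (hk : k < 2 ^ n) (hk' : k' < 2 ^ n)
    (h : flipPairs n k = flipPairs n k') : k = k' := by
  refine Nat.eq_of_testBit_eq fun i => ?_
  rcases lt_or_ge i n with hi | hi
  · have hfix : ∀ l, flipPairs n l ⟨2 * i, by omega⟩ = ⟨2 * i, by omega⟩ ↔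
        l.testBit i = false := fun l => by simp [flipPairs_apply, pairSwap, Fin.ext_iff]
    have := (hfix k).symm.trans (h ▸ hfix k')
    cases hb : k.testBit i <;> cases hb' : k'.testBit i <;> simp_all
  · rw [Nat.testBit_eq_false_of_lt (hk.trans_le (Nat.pow_le_pow_right two_pos hi)),
      Nat.testBit_eq_false_of_lt (hk'.trans_le (Nat.pow_le_pow_right two_pos hi))]

theorem permMat_flipPairs (n k : ℕ) :
    permMat (flipPairs n k) =
      1 + ∑ i ∈ range n with k.testBit i, (permMat (flipPairs n (2 ^ i)) - 1) := by
  ext a b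
  have hterm : ∀ i : ℕ, (permMat (flipPairs n (2 ^ i)) - 1) a b =
      if i = (b : ℕ) / 2 then
        ((if a = pairSwap b then 1 else 0) - if a = b then 1 else 0 : ℂ) else 0 := by
    intro i
    by_cases hi : i = (b : ℕ) / 2 <;>
      simp [permMat, flipPairs_apply, Matrix.one_apply, hi]
  have hb : (b : ℕ) / 2 < n := by omega
  simp only [Matrix.add_apply, Matrix.sum_apply, hterm, sum_ite_eq', mem_filter,
    mem_range, hb, true_and]
  by_cases h : k.testBit (b / 2) <;> simp [permMat, flipPairs_apply, Matrix.one_apply, h]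

theorem permMat_flipPairs_mem {n m k : ℕ} (hk : k < 2 ^ m)
    {X : Submodule ℂ (Matrix (Fin (2 * n)) (Fin (2 * n)) ℂ)} (hone : 1 ∈ X)
    (hpow : ∀ i < m, permMat (flipPairs n (2 ^ i)) ∈ X) : permMat (flipPairs n k) ∈ X := by
  rw [permMat_flipPairs]
  refine add_mem hone (Submodule.sum_mem _ fun i hi => Submodule.sub_mem _ (hpow i ?_) hone)
  by_contra! h
  simp [Nat.testBit_eq_false_of_lt (hk.trans_le (Nat.pow_le_pow_right two_pos h))] at hi

-- The last of the `m + 1` pairs is never swapped; it keeps `dB` positive when `m = 0`.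
def flipPairsBlockDiag (m : ℕ) :
    Matrix (Fin (2 ^ m) × Fin (2 * (m + 1))) (Fin (2 ^ m) × Fin (2 * (m + 1))) ℂ :=
  blockDiagPerm fun k => flipPairs (m + 1) k

theorem ncard_range_sum_blk_flipPairsBlockDiag (m : ℕ) :
    (Set.range fun k => ∑ j, blk (flipPairsBlockDiag m) j k).ncard = 2 ^ m := by
  have hinj : Function.Injective fun k : Fin (2 ^ m) => permMat (flipPairs (m + 1) k) :=
    fun k k' h => Fin.ext <| flipPairs_injective
      (k.2.trans (Nat.pow_lt_pow_succ one_lt_two)) (k'.2.trans (Nat.pow_lt_pow_succ one_lt_two))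
      (permMat_injective h)
  simp only [flipPairsBlockDiag, sum_blk_blockDiagPerm]
  rw [Set.ncard_range_of_injective hinj, Nat.card_eq_fintype_card, Fintype.card_fin]

theorem schmidtRank_flipPairsBlockDiag (m : ℕ) : schmidtRank (flipPairsBlockDiag m) = m + 1 := by
  let v : Fin (m + 1) → Matrix (Fin (2 * (m + 1))) (Fin (2 * (m + 1))) ℂ :=
    Fin.cons 1 fun i => permMat (flipPairs (m + 1) (2 ^ (i : ℕ)))
  have hle : schmidtRank (flipPairsBlockDiag m) ≤ m + 1 := by
    refine (schmidtRank_blockDiagPerm_le _ (X := Submodule.span ℂ (Set.range v)) fun k =>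
      permMat_flipPairs_mem k.2 (Submodule.subset_span ⟨0, rfl⟩) fun i hi =>
        Submodule.subset_span ⟨Fin.succ ⟨i, hi⟩, Fin.cons_succ _ _ _⟩).trans ?_
    exact (finrank_range_le_card (R := ℂ) v).trans_eq (Fintype.card_fin _)
  have hpos : 1 ≤ schmidtRank (flipPairsBlockDiag m) := one_le_schmidtRank_blockDiagPerm _
  have hbound := ncard_range_sum_blk_le (U := flipPairsBlockDiag m) (isPermMatrix_permMat _)
  rw [ncard_range_sum_blk_flipPairsBlockDiag, Nat.pow_le_pow_iff_right one_lt_two] at hbound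
  omega

theorem stmt11 :
    (∀ (dA dB r : ℕ) (U : Matrix (Fin dA × Fin dB) (Fin dA × Fin dB) ℂ),
      IsPermMatrix U → schmidtRank U = r →
      (Set.range (fun k : Fin dA => ∑ j : Fin dA, blk U j k)).ncard ≤ 2 ^ (r - 1)) ∧
    (∀ r : ℕ, 1 ≤ r →
      ∃ (dA dB : ℕ) (U : Matrix (Fin dA × Fin dB) (Fin dA × Fin dB) ℂ),
        IsPermMatrix U ∧ schmidtRank U = r ∧
        (Set.range (fun k : Fin dA => ∑ j : Fin dA, blk U j k)).ncard = 2 ^ (r - 1)) := by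
  refine ⟨fun dA dB r U hU hr => hr ▸ ncard_range_sum_blk_le hU, fun r hr => ?_⟩
  obtain ⟨m, rfl⟩ : ∃ m, r = m + 1 := ⟨r - 1, by omega⟩
  exact ⟨2 ^ m, 2 * (m + 1), flipPairsBlockDiag m, isPermMatrix_permMat _,
    schmidtRank_flipPairsBlockDiag m, ncard_range_sum_blk_flipPairsBlockDiag m⟩
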